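/- arXiv:0902.2805 — 2 statements merged into one kernel-verified Lean document; each statement's English description precedes it below -/
import Mathlib

section
/- The quantity Θ = (min_{c ∈ ℝ} F(c))/e² satisfies |Θ - 0.4549| < 5·10^{-5}; that is, the Gaussian density of the Wang–Zhu soliton equals 0.4549 to four decimal places. -/
/-!
Cutting the square `[-1,1]²` into `P` and the corner triangle above `x₁ + x₂ = 1` gives the
closed form `F c = (e^{2c} + (1 - c) e^{-c} - 2) / c²` for `c ≠ 0`, and `F` is convex as an
integral of the convex functions `c ↦ e^{-c t}`. For a convex `f` with `f b ≤ f (b ± h)` the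
minimum is attained in `[b - h, b + h]` and is at least `2 f b - max (f (b - h)) (f (b + h))`,
because the secant through `b - h` and `b` stays below `f` to the right of `b` (and symmetrically).
With `b = -0.435`, `h = 0.004` and Taylor bounds for `exp`, this pins `min F ≈ 3.3609382` to
within `1.3 · 10⁻⁵`, while `min F / e² ≈ 0.4548535`.
-/

open MeasureTheory Real Set

/-- The closed pentagon with vertices (-1,-1), (1,-1), (1,0), (0,1), (-1,1). -/
def P : Set (ℝ × ℝ) :=
  {p : ℝ × ℝ | -1 ≤ p.1 ∧ p.1 ≤ 1 ∧ -1 ≤ p.2 ∧ p.2 ≤ 1 ∧ p.1 + p.2 ≤ 1}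

/-- `F c = ∫_P e^{-c(x₁+x₂)} dx₁ dx₂` (Lebesgue measure on ℝ²). -/
noncomputable def F (c : ℝ) : ℝ := ∫ p in P, Real.exp (-c * (p.1 + p.2))

namespace ConvexOn

variable {f : ℝ → ℝ}

theorem le_apply_of_le_left (hf : ConvexOn ℝ univ f) {a b x : ℝ} (hab : a < b)
    (hfab : f b ≤ f a) (hxa : x ≤ a) : f a ≤ f x := by
  rcases hxa.eq_or_lt with rfl | hxa
  · rfl
  · exact hf.le_left_of_right_le (mem_univ x) (mem_univ b)
      (by rw [openSegment_eq_Ioo (hxa.trans hab)]; exact ⟨hxa, hab⟩) hfab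

theorem le_apply_of_le_right (hf : ConvexOn ℝ univ f) {a b x : ℝ} (hab : a < b)
    (hfab : f a ≤ f b) (hbx : b ≤ x) : f b ≤ f x := by
  rcases hbx.eq_or_lt with rfl | hbx
  · rfl
  · exact hf.le_right_of_left_le (mem_univ a) (mem_univ x)
      (by rw [openSegment_eq_Ioo (hab.trans hbx)]; exact ⟨hab, hbx⟩) hfab

theorem comp_neg (hf : ConvexOn ℝ univ f) : ConvexOn ℝ univ (fun x => f (-x)) := by
  refine ⟨convex_univ, fun x _ y _ a b ha hb hab => ?_⟩
  simpa [smul_eq_mul, neg_add_rev, add_comm] using hf.2 (mem_univ (-x)) (mem_univ (-y)) ha hb hab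

theorem exists_isMinOn_Icc (hf : ConvexOn ℝ univ f) {a b c : ℝ} (hab : a < b) (hbc : b < c)
    (hfa : f b ≤ f a) (hfc : f b ≤ f c) : ∃ m ∈ Icc a c, IsMinOn f univ m := by
  obtain ⟨m, hm, hmin⟩ := isCompact_Icc.exists_isMinOn (nonempty_Icc.2 (hab.trans hbc).le)
    ((hf.continuousOn isOpen_univ).mono (subset_univ _))
  refine ⟨m, hm, fun x _ => ?_⟩
  rcases lt_or_ge x a with hxa | hax
  · exact (hmin (left_mem_Icc.2 (hab.trans hbc).le)).trans
      (hf.le_apply_of_le_left hab hfa hxa.le)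
  rcases le_or_gt x c with hxc | hcx
  · exact hmin ⟨hax, hxc⟩
  · exact (hmin (right_mem_Icc.2 (hab.trans hbc).le)).trans
      (hf.le_apply_of_le_right hbc hfc hcx.le)

theorem two_mul_sub_le_of_le (hf : ConvexOn ℝ univ f) {b h x : ℝ} (hh : 0 < h)
    (hl : f b ≤ f (b - h)) (hr : f b ≤ f (b + h)) (hbx : b ≤ x) :
    2 * f b - f (b - h) ≤ f x := by
  rcases le_or_gt x (b + h) with hxh | hxh
  · rcases hbx.eq_or_lt with rfl | hbx
    · linarith
    have hslope := hf.slope_mono_adjacent (mem_univ (b - h)) (mem_univ x) (by linarith) hbx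
    rw [sub_sub_cancel, div_le_div_iff₀ hh (by linarith)] at hslope
    nlinarith
  · linarith [hf.le_apply_of_le_right (lt_add_of_pos_right b hh) hr hxh.le]

theorem two_mul_sub_max_le (hf : ConvexOn ℝ univ f) {b h : ℝ} (hh : 0 < h)
    (hl : f b ≤ f (b - h)) (hr : f b ≤ f (b + h)) (x : ℝ) :
    2 * f b - max (f (b - h)) (f (b + h)) ≤ f x := by
  rcases le_total b x with hbx | hxb
  · linarith [hf.two_mul_sub_le_of_le hh hl hr hbx, le_max_left (f (b - h)) (f (b + h))]
  · have := hf.comp_neg.two_mul_sub_le_of_le (b := -b) (x := -x) hh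
      (by simpa [add_comm] using hr) (by simpa [sub_eq_add_neg, add_comm] using hl) (neg_le_neg hxb)
    rw [neg_neg, neg_neg, neg_sub, sub_neg_eq_add, add_comm h b] at this
    linarith [le_max_right (f (b - h)) (f (b + h))]

end ConvexOn

theorem convexOn_integral {α E : Type*} [MeasurableSpace α] {μ : Measure α}
    [AddCommGroup E] [Module ℝ E] {s : Set E} (hs : Convex ℝ s) {g : E → α → ℝ}
    (hint : ∀ c ∈ s, Integrable (g c) μ) (hconv : ∀ p, ConvexOn ℝ s (g · p)) :
    ConvexOn ℝ s (fun c => ∫ p, g c p ∂μ) := by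
  refine ⟨hs, fun x hx y hy a b ha hb hab => ?_⟩
  calc ∫ p, g (a • x + b • y) p ∂μ ≤ ∫ p, (a * g x p + b * g y p) ∂μ :=
        integral_mono (hint _ (hs hx hy ha hb hab))
          (((hint x hx).const_mul a).add ((hint y hy).const_mul b))
          fun p => (hconv p).2 hx hy ha hb hab
    _ = a • ∫ p, g x p ∂μ + b • ∫ p, g y p ∂μ := by
        rw [integral_add ((hint x hx).const_mul a) ((hint y hy).const_mul b),
          integral_const_mul, integral_const_mul, smul_eq_mul, smul_eq_mul]

theorem setIntegral_setOf_fst_mem_snd_mem {α β : Type*} [MeasurableSpace α] [MeasurableSpace β]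
    {μ : Measure α} {ν : Measure β} [SFinite μ] [SFinite ν] {A : Set α} {B : α → Set β}
    (hS : MeasurableSet {p : α × β | p.1 ∈ A ∧ p.2 ∈ B p.1}) (hA : MeasurableSet A)
    (hB : ∀ x, MeasurableSet (B x)) {f : α × β → ℝ}
    (hf : IntegrableOn f {p | p.1 ∈ A ∧ p.2 ∈ B p.1} (μ.prod ν)) :
    ∫ p in {p | p.1 ∈ A ∧ p.2 ∈ B p.1}, f p ∂μ.prod ν =
      ∫ x in A, ∫ y in B x, f (x, y) ∂ν ∂μ := by
  rw [← integral_indicator hS, integral_prod _ ((integrable_indicator_iff hS).2 hf),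
    ← integral_indicator hA]
  congr 1 with x
  by_cases hx : x ∈ A
  · rw [indicator_of_mem hx, ← integral_indicator (hB x)]
    congr 1 with y
    by_cases hy : y ∈ B x
    · rw [indicator_of_mem hy,
        indicator_of_mem (show (x, y) ∈ {p : α × β | p.1 ∈ A ∧ p.2 ∈ B p.1} from
          ⟨hx, hy⟩)]
    · rw [indicator_of_notMem (fun h => hy h.2), indicator_of_notMem hy]
  · rw [indicator_of_notMem hx]
    have hxS (y : β) : (x, y) ∉ {p : α × β | p.1 ∈ A ∧ p.2 ∈ B p.1} := fun h => hx h.1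
    simp_rw [indicator_of_notMem (hxS _), integral_zero]

theorem integral_exp_neg_mul {c : ℝ} (hc : c ≠ 0) (a b : ℝ) :
    ∫ x in a..b, exp (-c * x) = (exp (-c * a) - exp (-c * b)) / c := by
  rw [intervalIntegral.integral_comp_mul_left (fun x => exp x) (neg_ne_zero.2 hc), integral_exp,
    smul_eq_mul]
  field_simp
  ring

theorem exp_mem_Icc_of_abs_le_one {x : ℝ} (hx : |x| ≤ 1) {n : ℕ} (hn : 0 < n) :
    exp x ∈ Icc
      (∑ i ∈ Finset.range n, x ^ i / i.factorial - |x| ^ n * (n.succ / (n.factorial * n)))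
      (∑ i ∈ Finset.range n, x ^ i / i.factorial + |x| ^ n * (n.succ / (n.factorial * n))) := by
  have h := Real.exp_bound hx hn
  rw [abs_sub_le_iff] at h
  constructor <;> linarith

def square : Set (ℝ × ℝ) := Icc (-1) 1 ×ˢ Icc (-1) 1

def corner : Set (ℝ × ℝ) := {p | p.1 ∈ Icc 0 1 ∧ p.2 ∈ Ioc (1 - p.1) 1}

theorem square_eq_union : square = P ∪ corner := by
  ext ⟨x, y⟩
  simp only [square, P, corner, mem_prod, mem_Icc, mem_Ioc, mem_union, mem_ofPred_eq]
  constructor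
  · rintro ⟨⟨h1, h2⟩, h3, h4⟩
    by_cases h : x + y ≤ 1
    · exact Or.inl ⟨h1, h2, h3, h4, h⟩
    · exact Or.inr ⟨⟨by linarith, h2⟩, by linarith, h4⟩
  · rintro (⟨h1, h2, h3, h4, -⟩ | ⟨⟨h1, h2⟩, h3, h4⟩)
    · exact ⟨⟨h1, h2⟩, h3, h4⟩
    · exact ⟨⟨by linarith, h2⟩, by linarith, h4⟩

theorem disjoint_P_corner : Disjoint P corner := by
  rw [Set.disjoint_left]
  rintro ⟨x, y⟩ ⟨-, -, -, -, h⟩ ⟨-, h', -⟩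
  simp only at h h'
  linarith

theorem measurableSet_corner : MeasurableSet corner := by
  unfold corner; measurability

theorem exp_neg_mul_add (c x y : ℝ) : exp (-c * (x + y)) = exp (-c * x) * exp (-c * y) := by
  rw [← exp_add]; ring_nf

theorem integrableOn_square (c : ℝ) :
    IntegrableOn (fun p : ℝ × ℝ => exp (-c * (p.1 + p.2))) square :=
  ContinuousOn.integrableOn_compact (isCompact_Icc.prod isCompact_Icc) (by fun_prop)

theorem integral_square {c : ℝ} (hc : c ≠ 0) :
    ∫ p in square, exp (-c * (p.1 + p.2)) = ((exp c - exp (-c)) / c) ^ 2 := by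
  have hI : ∫ x in Icc (-1 : ℝ) 1, exp (-c * x) = (exp c - exp (-c)) / c := by
    rw [integral_Icc_eq_integral_Ioc, ← intervalIntegral.integral_of_le (by norm_num),
      integral_exp_neg_mul hc]
    ring_nf
  simp_rw [exp_neg_mul_add]
  rw [square, Measure.volume_eq_prod,
    setIntegral_prod_mul (fun x => exp (-c * x)) (fun y => exp (-c * y)), hI, sq]

theorem integral_corner {c : ℝ} (hc : c ≠ 0) :
    ∫ p in corner, exp (-c * (p.1 + p.2)) = exp (-c) / c - exp (-c) * (1 - exp (-c)) / c ^ 2 := by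
  have hsection : ∀ x ∈ Icc (0 : ℝ) 1, ∫ y in Ioc (1 - x) 1, exp (-c * (x + y))
      = exp (-c) / c - exp (-c) / c * exp (-c * x) := by
    intro x hx
    simp_rw [exp_neg_mul_add]
    rw [← intervalIntegral.integral_of_le (by linarith [hx.1]),
      intervalIntegral.integral_const_mul, integral_exp_neg_mul hc, mul_one, mul_div_assoc',
      mul_sub, ← exp_add]
    ring_nf
  rw [corner, Measure.volume_eq_prod,
    setIntegral_setOf_fst_mem_snd_mem (A := Icc 0 1) (B := fun x => Ioc (1 - x) 1)
      measurableSet_corner measurableSet_Icc (fun _ => measurableSet_Ioc)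
      ((integrableOn_square c).mono_set (square_eq_union ▸ subset_union_right)),
    setIntegral_congr_fun measurableSet_Icc hsection, integral_Icc_eq_integral_Ioc,
    ← intervalIntegral.integral_of_le zero_le_one, intervalIntegral.integral_sub,
    intervalIntegral.integral_const_mul, integral_exp_neg_mul hc, intervalIntegral.integral_const]
  · simp only [mul_zero, mul_one, exp_zero, sub_zero, one_smul]
    ring
  · exact intervalIntegrable_const
  · exact (by fun_prop : Continuous _).intervalIntegrable _ _

theorem integrableOn_P (c : ℝ) : IntegrableOn (fun p : ℝ × ℝ => exp (-c * (p.1 + p.2))) P :=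
  (integrableOn_square c).mono_set (square_eq_union ▸ subset_union_left)

theorem convexOn_F : ConvexOn ℝ univ F :=
  convexOn_integral convex_univ (fun c _ => integrableOn_P c) fun p => by
    refine ⟨convex_univ, fun x _ y _ a b ha hb hab => ?_⟩
    have := convexOn_exp.2 (mem_univ (-x * (p.1 + p.2))) (mem_univ (-y * (p.1 + p.2))) ha hb hab
    simp only [smul_eq_mul] at this ⊢
    convert this using 2
    ring

theorem F_eq {c : ℝ} (hc : c ≠ 0) : F c = (exp (2 * c) + (1 - c) * exp (-c) - 2) / c ^ 2 := by
  have hsplit := setIntegral_union disjoint_P_corner measurableSet_corner (integrableOn_P c)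
    ((integrableOn_square c).mono_set (square_eq_union ▸ subset_union_right))
  rw [← square_eq_union, integral_square hc, integral_corner hc] at hsplit
  rw [F, eq_sub_of_add_eq hsplit.symm, show 2 * c = c + c by ring, exp_add, exp_neg]
  field_simp
  ring

theorem F_mem_Icc_of_exp_mem_Icc {c A₁ A₂ B₁ B₂ : ℝ} (hc₀ : c ≠ 0) (hc₁ : c ≤ 1)
    (hA : exp (2 * c) ∈ Icc A₁ A₂) (hB : exp (-c) ∈ Icc B₁ B₂) :
    F c ∈ Icc ((A₁ + (1 - c) * B₁ - 2) / c ^ 2) ((A₂ + (1 - c) * B₂ - 2) / c ^ 2) := by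
  have h1c : 0 ≤ 1 - c := by linarith
  rw [F_eq hc₀]
  constructor <;> gcongr
  exacts [hA.1, hB.1, hA.2, hB.2]

theorem F_mem_Ioo_near_min :
    F (-87 / 200 - 1 / 250) ∈ Ioo 3.3609506 3.3609507 ∧
      F (-87 / 200) ∈ Ioo 3.3609382 3.3609383 ∧
      F (-87 / 200 + 1 / 250) ∈ Ioo 3.3609478 3.3609479 := by
  refine ⟨?_, ?_, ?_⟩ <;>
  refine mem_of_mem_of_subset (F_mem_Icc_of_exp_mem_Icc (by norm_num) (by norm_num)
    (exp_mem_Icc_of_abs_le_one (n := 12) (by norm_num [abs_le]) (by norm_num))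
    (exp_mem_Icc_of_abs_le_one (n := 12) (by norm_num [abs_le]) (by norm_num)))
    (Icc_subset_Ioo ?_ ?_) <;>
  norm_num [Finset.sum_range_succ, Nat.factorial]

theorem exp_two_mem_Ioo : exp 2 ∈ Ioo 7.389056 7.3890562 := by
  have h₁ := exp_one_gt_d9
  have h₂ := exp_one_lt_d9
  rw [show (2 : ℝ) = 1 + 1 by norm_num, exp_add]
  constructor <;> nlinarith

/-- The Gaussian density `Θ = (min F)/e²` of the Wang–Zhu soliton equals `0.4549`
to four decimal places. -/
theorem stmt_6 :
    ∃ cs : ℝ, (∀ c : ℝ, F cs ≤ F c) ∧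
      |F cs / Real.exp 2 - 0.4549| < 5e-5 := by
  obtain ⟨⟨hl₁, hl₂⟩, ⟨hb₁, hb₂⟩, ⟨hr₁, hr₂⟩⟩ := F_mem_Ioo_near_min
  have hl : F (-87 / 200) ≤ F (-87 / 200 - 1 / 250) := by linarith
  have hr : F (-87 / 200) ≤ F (-87 / 200 + 1 / 250) := by linarith
  obtain ⟨cs, -, hmin⟩ := convexOn_F.exists_isMinOn_Icc (by norm_num) (by norm_num) hl hr
  have hlow := convexOn_F.two_mul_sub_max_le (by norm_num) hl hr cs
  have hup : F cs ≤ F (-87 / 200) := hmin (mem_univ _)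
  have hmax : max (F (-87 / 200 - 1 / 250)) (F (-87 / 200 + 1 / 250)) < 3.3609507 :=
    max_lt hl₂ (by linarith)
  obtain ⟨he₁, he₂⟩ := exp_two_mem_Ioo
  refine ⟨cs, fun c => hmin (mem_univ c), ?_⟩
  rw [abs_sub_lt_iff, sub_lt_iff_lt_add, sub_lt_comm, div_lt_iff₀ (by positivity),
    lt_div_iff₀ (by positivity)]
  constructor <;> nlinarith
end

section
/- The Gaussian density values on the two manifolds are ordered oppositely: (min_{c∈ℝ} H(c))/e² > (12 - 3·inf_{x>0} h(x))/e² (on CP²#(CP²-bar) the Koiso–Cao soliton has strictly larger density than the Page metric), while (min_{c∈ℝ} F(c))/e² < (21/2 - inf_{x>0} f(x))/e² (on CP²#2(CP²-bar) the Wang–Zhu soliton has strictly smaller density than the Chen–LeBrun–Weber metric). -/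
open MeasureTheory Real Set

/-- The closed trapezium with vertices (2,-1), (-1,2), (-1,0), (0,-1). -/
def T : Set (ℝ × ℝ) :=
  {p : ℝ × ℝ | -1 ≤ p.1 ∧ -1 ≤ p.2 ∧ -1 ≤ p.1 + p.2 ∧ p.1 + p.2 ≤ 1}

/-- `H c = ∫_T e^{-c(x₁+x₂)} dx₁ dx₂` (Lebesgue measure on ℝ²). -/
noncomputable def H (c : ℝ) : ℝ := ∫ p in T, Real.exp (-c * (p.1 + p.2))

/-- The Chen–LeBrun–Weber rational function. -/
noncomputable def f (x : ℝ) : ℝ :=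
  3 * (32 + 176*x + 318*x^2 + 280*x^3 + 132*x^4 + 32*x^5 + 3*x^6) /
    (12 + 72*x + 138*x^2 + 120*x^3 + 54*x^4 + 12*x^5 + x^6)

/-- LeBrun's rational function for the Page metric. -/
noncomputable def h (x : ℝ) : ℝ :=
  (4 + 14*x + 16*x^2 + 3*x^3) / (x * (6 + 6*x + x^2))

/-!
Shearing `(x₁, x₂) ↦ (x₁, x₁ + x₂)` turns both integrals into one-dimensional ones, weighted by
the lengths of the slices `x₁ + x₂ = s`: `H c = ∫_{-1}^{1} (s + 2) e^{-cs} ds` and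
`F c = ∫_{-2}^{1} (2 - |s|) e^{-cs} ds`, which have elementary closed forms.

`H` is convex in `c`, so on `c ≤ 0.53` and on `c ≥ 0.53` it lies above its tangent lines at `0.52`
and `0.54`; evaluating these gives `H ≥ 3.826`, while `h ≥ 109/40` and `12 - 3 · 109/40 = 3.825`.
The second inequality only needs evaluations near the optima: `F(-0.435) < 3.361` and
`f(0.96) < 7.1365`, where `21/2 - 7.1365 = 3.3635`. All exponentials are bounded by their
degree-8 Taylor polynomials.
-/

section SliceIntegral

variable {E : Type*} [NormedAddCommGroup E] [NormedSpace ℝ E] [CompleteSpace E]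

theorem integral_comp_add_eq_integral_measureReal_slice {g : ℝ → E} {S : Set (ℝ × ℝ)}
    (hS : MeasurableSet S) (hg : IntegrableOn (fun p : ℝ × ℝ => g (p.1 + p.2)) S) :
    ∫ p in S, g (p.1 + p.2) = ∫ s, volume.real {x | (x, s - x) ∈ S} • g s := by
  let e : ℝ × ℝ ≃ᵐ ℝ × ℝ := MeasurableEquiv.prodComm.trans (MeasurableEquiv.shearSubRight ℝ)
  have e_apply : ∀ q, e q = (q.2, q.1 - q.2) := fun _ => rfl
  have he : MeasurePreserving e := measurePreserving_prod_sub_swap volume volume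
  have hU : MeasurableSet (e ⁻¹' S) := e.measurable hS
  have hgU : IntegrableOn (fun q : ℝ × ℝ => g q.1) (e ⁻¹' S) := by
    rw [← he.integrableOn_comp_preimage e.measurableEmbedding] at hg
    simpa only [Function.comp_def, e_apply, add_sub_cancel] using hg
  calc ∫ p in S, g (p.1 + p.2) = ∫ q in e ⁻¹' S, g q.1 := by
        rw [← he.setIntegral_preimage_emb e.measurableEmbedding]
        simp only [e_apply, add_sub_cancel]
    _ = ∫ s, ∫ x, (e ⁻¹' S).indicator (fun q => g q.1) (s, x) := by
        rw [← integral_indicator hU, Measure.volume_eq_prod,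
          integral_prod _ ((integrable_indicator_iff hU).2 hgU)]
    _ = ∫ s, volume.real {x | (x, s - x) ∈ S} • g s := by
        congr 1 with s
        have hslice : MeasurableSet {x | (x, s - x) ∈ S} := hS.preimage (by fun_prop)
        rw [← integral_indicator_const _ hslice]
        rfl

theorem integral_comp_add_eq_intervalIntegral {g : ℝ → E} (hg : Continuous g)
    {S : Set (ℝ × ℝ)} (hS : IsCompact S) {w : ℝ → ℝ} {u v : ℝ} (huv : u ≤ v)
    (hw : ∀ s, volume.real {x | (x, s - x) ∈ S} = (Icc u v).indicator w s) :
    ∫ p in S, g (p.1 + p.2) = ∫ s in u..v, w s • g s := by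
  rw [integral_comp_add_eq_integral_measureReal_slice hS.measurableSet
      ((hg.comp (continuous_fst.add continuous_snd)).continuousOn.integrableOn_compact hS)]
  simp_rw [hw, ← indicator_smul_apply_left]
  rw [integral_indicator measurableSet_Icc, integral_Icc_eq_integral_Ioc,
    intervalIntegral.integral_of_le huv]

end SliceIntegral

lemma isCompact_T : IsCompact T := by
  refine ((isCompact_Icc (a := -1) (b := 2)).prod
    (isCompact_Icc (a := -1) (b := 2))).of_isClosed_subset ?_ ?_
  · simp only [T, ofPred_and]
    apply_rules [IsClosed.inter, isClosed_le] <;> fun_prop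
  · rintro ⟨x, y⟩ ⟨h1, h2, h3, h4⟩
    exact ⟨⟨h1, by linarith⟩, h2, by linarith⟩

lemma isCompact_P : IsCompact P := by
  refine ((isCompact_Icc (a := -1) (b := 1)).prod
    (isCompact_Icc (a := -1) (b := 1))).of_isClosed_subset ?_ ?_
  · simp only [P, ofPred_and]
    apply_rules [IsClosed.inter, isClosed_le] <;> fun_prop
  · rintro ⟨x, y⟩ ⟨h1, h2, h3, h4, -⟩
    exact ⟨⟨h1, h2⟩, h3, h4⟩

lemma measureReal_slice_T (s : ℝ) :
    volume.real {x | (x, s - x) ∈ T} = (Icc (-1) 1).indicator (fun s => s + 2) s := by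
  by_cases hs : s ∈ Icc (-1) 1
  · have : {x | (x, s - x) ∈ T} = Icc (-1) (s + 1) := by
      ext x; simp only [T, mem_ofPred_eq, mem_Icc]; constructor <;> intro h
      · constructor <;> linarith
      · refine ⟨?_, ?_, ?_, ?_⟩ <;> linarith [hs.1, hs.2]
    rw [this, indicator_of_mem hs, volume_real_Icc_of_le (by linarith [hs.1])]
    ring
  · have : {x | (x, s - x) ∈ T} = ∅ := by
      ext x; simp only [T, mem_ofPred_eq, mem_empty_iff_false, iff_false]
      exact fun h => hs ⟨by linarith, by linarith⟩
    rw [this, indicator_of_notMem hs, measureReal_empty]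

lemma measureReal_slice_P (s : ℝ) :
    volume.real {x | (x, s - x) ∈ P} = (Icc (-2) 1).indicator (fun s => 2 - |s|) s := by
  rcases le_or_gt s 0 with hs | hs
  · by_cases hs' : -2 ≤ s
    · have : {x | (x, s - x) ∈ P} = Icc (-1) (s + 1) := by
        ext x; simp only [P, mem_ofPred_eq, mem_Icc]; constructor <;> intro h
        · constructor <;> linarith
        · refine ⟨?_, ?_, ?_, ?_, ?_⟩ <;> linarith
      rw [this, indicator_of_mem (show s ∈ Icc (-2 : ℝ) 1 from ⟨hs', by linarith⟩),
        volume_real_Icc_of_le (by linarith), abs_of_nonpos hs]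
      ring
    · have : {x | (x, s - x) ∈ P} = ∅ := by
        ext x; simp only [P, mem_ofPred_eq, mem_empty_iff_false, iff_false]
        exact fun h => hs' (by linarith)
      rw [this, indicator_of_notMem (fun h : s ∈ Icc (-2) 1 => hs' h.1), measureReal_empty]
  · by_cases hs' : s ≤ 1
    · have : {x | (x, s - x) ∈ P} = Icc (s - 1) 1 := by
        ext x; simp only [P, mem_ofPred_eq, mem_Icc]; constructor <;> intro h
        · constructor <;> linarith
        · refine ⟨?_, ?_, ?_, ?_, ?_⟩ <;> linarith
      rw [this, indicator_of_mem (show s ∈ Icc (-2 : ℝ) 1 from ⟨by linarith, hs'⟩),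
        volume_real_Icc_of_le (by linarith), abs_of_pos hs]
      ring
    · have : {x | (x, s - x) ∈ P} = ∅ := by
        ext x; simp only [P, mem_ofPred_eq, mem_empty_iff_false, iff_false]
        exact fun h => hs' (by linarith)
      rw [this, indicator_of_notMem (fun h : s ∈ Icc (-2) 1 => hs' h.2), measureReal_empty]

lemma H_eq_intervalIntegral (c : ℝ) : H c = ∫ s in (-1 : ℝ)..1, (s + 2) * exp (-c * s) :=
  integral_comp_add_eq_intervalIntegral (g := fun s => exp (-c * s)) (by fun_prop) isCompact_T
    (by norm_num) measureReal_slice_T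

lemma F_eq_intervalIntegral (c : ℝ) :
    F c = (∫ s in (-2 : ℝ)..0, (s + 2) * exp (-c * s)) +
      ∫ s in (0 : ℝ)..1, (2 - s) * exp (-c * s) := by
  have hcont : ∀ u v : ℝ, IntervalIntegrable (fun s => (2 - |s|) * exp (-c * s)) volume u v :=
    fun u v => by apply Continuous.intervalIntegrable; fun_prop
  rw [F, integral_comp_add_eq_intervalIntegral (g := fun s => exp (-c * s)) (by fun_prop)
      isCompact_P (by norm_num) measureReal_slice_P]
  simp only [smul_eq_mul]
  rw [← intervalIntegral.integral_add_adjacent_intervals (hcont (-2) 0) (hcont 0 1)]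
  congr 1
  · refine intervalIntegral.integral_congr fun s hs => ?_
    rw [uIcc_of_le (by norm_num)] at hs
    simp only [abs_of_nonpos hs.2]
    ring
  · refine intervalIntegral.integral_congr fun s hs => ?_
    rw [uIcc_of_le (by norm_num)] at hs
    simp only [abs_of_nonneg hs.1]

theorem intervalIntegral_mul_exp_tangent_le {w : ℝ → ℝ} (hw : Continuous w) {u v : ℝ}
    (huv : u ≤ v) (hw0 : ∀ s ∈ Icc u v, 0 ≤ w s) (a c : ℝ) :
    (∫ s in u..v, w s * exp (-a * s)) - (c - a) * ∫ s in u..v, s * w s * exp (-a * s) ≤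
      ∫ s in u..v, w s * exp (-c * s) := by
  rw [← intervalIntegral.integral_const_mul, ← intervalIntegral.integral_sub
    (by apply Continuous.intervalIntegrable; fun_prop)
    (by apply Continuous.intervalIntegrable; fun_prop)]
  refine intervalIntegral.integral_mono_on huv (by apply Continuous.intervalIntegrable; fun_prop)
    (by apply Continuous.intervalIntegrable; fun_prop) fun s hs => ?_
  have htangent : exp (-a * s) * (1 - (c - a) * s) ≤ exp (-c * s) :=
    calc exp (-a * s) * (1 - (c - a) * s) ≤ exp (-a * s) * exp (-(c - a) * s) := by
          gcongr; linarith [add_one_le_exp (-(c - a) * s)]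
      _ = exp (-c * s) := by rw [← exp_add]; ring_nf
  calc w s * exp (-a * s) - (c - a) * (s * w s * exp (-a * s))
      = w s * (exp (-a * s) * (1 - (c - a) * s)) := by ring
    _ ≤ w s * exp (-c * s) := mul_le_mul_of_nonneg_left htangent (hw0 s hs)

noncomputable def quadraticMulExpPrimitive (a b d c s : ℝ) : ℝ :=
  ((a * s ^ 2 + b * s + d) / c + (2 * a * s + b) / c ^ 2 + 2 * a / c ^ 3) * exp (-c * s)

lemma hasDerivAt_quadraticMulExpPrimitive (a b d : ℝ) {c : ℝ} (hc : c ≠ 0) (s : ℝ) :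
    HasDerivAt (quadraticMulExpPrimitive a b d c)
      (-((a * s ^ 2 + b * s + d) * exp (-c * s))) s := by
  have hexp : HasDerivAt (fun s => exp (-c * s)) (exp (-c * s) * -c) s :=
    ((hasDerivAt_id s).const_mul (-c)).exp.congr_deriv (by simp)
  have hpoly : HasDerivAt
      (fun s => (a * s ^ 2 + b * s + d) / c + (2 * a * s + b) / c ^ 2 + 2 * a / c ^ 3)
      ((2 * a * s + b) / c + 2 * a / c ^ 2) s := by
    have h1 := ((((hasDerivAt_pow 2 s).const_mul a).add ((hasDerivAt_id s).const_mul b)).add_const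
      d).div_const c
    have h2 := (((hasDerivAt_id s).const_mul (2 * a)).add_const b).div_const (c ^ 2)
    exact ((h1.add h2).add_const (2 * a / c ^ 3)).congr_deriv (by simp; ring)
  exact (hpoly.mul hexp).congr_deriv (by field_simp; ring)

theorem intervalIntegral_quadratic_mul_exp (a b d : ℝ) {c : ℝ} (hc : c ≠ 0) (u v : ℝ) :
    ∫ s in u..v, (a * s ^ 2 + b * s + d) * exp (-c * s) =
      quadraticMulExpPrimitive a b d c u - quadraticMulExpPrimitive a b d c v := by
  rw [intervalIntegral.integral_eq_sub_of_hasDerivAt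
    (fun s _ => (hasDerivAt_quadraticMulExpPrimitive a b d hc s).neg.congr_deriv (neg_neg _))
    (by apply Continuous.intervalIntegrable; fun_prop)]
  simp only [Pi.neg_apply]
  ring

lemma exp_mem_Icc_of_taylor {x lo hi : ℝ} {n : ℕ} (hn : 0 < n) (hx : |x| ≤ 1)
    (hlo : lo ≤
      ∑ m ∈ Finset.range n, x ^ m / m.factorial - |x| ^ n * (n.succ / (n.factorial * n)))
    (hhi : ∑ m ∈ Finset.range n, x ^ m / m.factorial + |x| ^ n * (n.succ / (n.factorial * n)) ≤
      hi) :
    exp x ∈ Icc lo hi := by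
  have := abs_sub_le_iff.1 (Real.exp_bound hx hn)
  constructor <;> linarith

/-- `∫_T (x₁ + x₂) e^{-a(x₁+x₂)}`, i.e. `-H'(a)`. -/
noncomputable def firstMomentH (a : ℝ) : ℝ := ∫ s in (-1 : ℝ)..1, s * (s + 2) * exp (-a * s)

lemma H_sub_mul_firstMomentH_le (a c : ℝ) : H a - (c - a) * firstMomentH a ≤ H c := by
  simp only [H_eq_intervalIntegral, firstMomentH]
  exact intervalIntegral_mul_exp_tangent_le (by fun_prop) (by norm_num)
    (fun s hs => by linarith [hs.1]) a c

lemma H_eq_quadraticMulExpPrimitive {c : ℝ} (hc : c ≠ 0) :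
    H c = quadraticMulExpPrimitive 0 1 2 c (-1) - quadraticMulExpPrimitive 0 1 2 c 1 := by
  rw [H_eq_intervalIntegral, ← intervalIntegral_quadratic_mul_exp 0 1 2 hc]
  congr 1 with s
  ring

lemma firstMomentH_eq_quadraticMulExpPrimitive {c : ℝ} (hc : c ≠ 0) :
    firstMomentH c =
      quadraticMulExpPrimitive 1 2 0 c (-1) - quadraticMulExpPrimitive 1 2 0 c 1 := by
  rw [firstMomentH, ← intervalIntegral_quadratic_mul_exp 1 2 0 hc]
  congr 1 with s
  ring

lemma F_eq_quadraticMulExpPrimitive {c : ℝ} (hc : c ≠ 0) :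
    F c = quadraticMulExpPrimitive 0 1 2 c (-2) - quadraticMulExpPrimitive 0 1 2 c 0 +
      (quadraticMulExpPrimitive 0 (-1) 2 c 0 - quadraticMulExpPrimitive 0 (-1) 2 c 1) := by
  rw [F_eq_intervalIntegral, ← intervalIntegral_quadratic_mul_exp 0 1 2 hc,
    ← intervalIntegral_quadratic_mul_exp 0 (-1) 2 hc]
  congr 1 <;> congr 1 with s <;> ring

lemma le_H_of_le {c : ℝ} (hc : c ≤ 53 / 100) : 3.826 ≤ H c := by
  obtain ⟨hp1, hp2⟩ : exp (13 / 25) ∈ Icc 1.68202 1.68203 :=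
    exp_mem_Icc_of_taylor (n := 8) (by norm_num) (by norm_num [abs_le])
      (by norm_num [Finset.sum_range_succ, Nat.factorial])
      (by norm_num [Finset.sum_range_succ, Nat.factorial])
  obtain ⟨hm1, hm2⟩ : exp (-(13 / 25)) ∈ Icc 0.59452 0.594521 :=
    exp_mem_Icc_of_taylor (n := 8) (by norm_num) (by norm_num [abs_le])
      (by norm_num [Finset.sum_range_succ, Nat.factorial])
      (by norm_num [Finset.sum_range_succ, Nat.factorial])
  have hH : 3.82654 ≤ H (13 / 25) := by
    rw [H_eq_quadraticMulExpPrimitive (by norm_num)]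
    norm_num [quadraticMulExpPrimitive]
    linarith
  have hJ : 0 ≤ firstMomentH (13 / 25) ∧ firstMomentH (13 / 25) ≤ 0.0095 := by
    rw [firstMomentH_eq_quadraticMulExpPrimitive (by norm_num)]
    norm_num [quadraticMulExpPrimitive]
    constructor <;> linarith
  nlinarith [H_sub_mul_firstMomentH_le (13 / 25) c]

lemma le_H_of_ge {c : ℝ} (hc : 53 / 100 ≤ c) : 3.826 ≤ H c := by
  obtain ⟨hp1, hp2⟩ : exp (27 / 50) ∈ Icc 1.716006 1.716007 :=
    exp_mem_Icc_of_taylor (n := 8) (by norm_num) (by norm_num [abs_le])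
      (by norm_num [Finset.sum_range_succ, Nat.factorial])
      (by norm_num [Finset.sum_range_succ, Nat.factorial])
  obtain ⟨hm1, hm2⟩ : exp (-(27 / 50)) ∈ Icc 0.582747 0.582749 :=
    exp_mem_Icc_of_taylor (n := 8) (by norm_num) (by norm_num [abs_le])
      (by norm_num [Finset.sum_range_succ, Nat.factorial])
      (by norm_num [Finset.sum_range_succ, Nat.factorial])
  have hH : 3.82663 ≤ H (27 / 50) := by
    rw [H_eq_quadraticMulExpPrimitive (by norm_num)]
    norm_num [quadraticMulExpPrimitive]
    linarith
  have hJ : -0.0153 ≤ firstMomentH (27 / 50) ∧ firstMomentH (27 / 50) ≤ 0 := by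
    rw [firstMomentH_eq_quadraticMulExpPrimitive (by norm_num)]
    norm_num [quadraticMulExpPrimitive]
    constructor <;> linarith
  nlinarith [H_sub_mul_firstMomentH_le (27 / 50) c]

lemma le_H (c : ℝ) : 3.826 ≤ H c :=
  (le_total c (53 / 100)).elim le_H_of_le le_H_of_ge

lemma F_le : F (-(87 / 200)) ≤ 3.361 := by
  obtain ⟨hp1, hp2⟩ : exp (87 / 200) ∈ Icc 1.544962 1.544964 :=
    exp_mem_Icc_of_taylor (n := 8) (by norm_num) (by norm_num [abs_le])
      (by norm_num [Finset.sum_range_succ, Nat.factorial])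
      (by norm_num [Finset.sum_range_succ, Nat.factorial])
  obtain ⟨hm1, hm2⟩ : exp (-(87 / 100)) ∈ Icc 0.418934 0.418954 :=
    exp_mem_Icc_of_taylor (n := 8) (by norm_num) (by norm_num [abs_le])
      (by norm_num [Finset.sum_range_succ, Nat.factorial])
      (by norm_num [Finset.sum_range_succ, Nat.factorial])
  rw [F_eq_quadraticMulExpPrimitive (by norm_num)]
  norm_num [quadraticMulExpPrimitive]
  linarith

lemma F_nonneg (c : ℝ) : 0 ≤ F c :=
  setIntegral_nonneg isCompact_P.measurableSet fun _ _ => (exp_pos _).le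

lemma le_h {x : ℝ} (hx : 0 < x) : 109 / 40 ≤ h x := by
  -- the minimum of `h` is `≈ 2.7262`, attained near `x = 13/6`
  rw [h, le_div_iff₀ (by positivity)]
  nlinarith [mul_nonneg (by linarith : (0 : ℝ) ≤ 11 * x + 101 / 3) (sq_nonneg (x - 13 / 6))]

lemma f_nonneg {x : ℝ} (hx : 0 < x) : 0 ≤ f x := by
  unfold f
  positivity

/-- On `CP²#(CP²-bar)` the Koiso–Cao soliton has strictly larger Gaussian density
than the Page metric, while on `CP²#2(CP²-bar)` the Wang–Zhu soliton has strictly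
smaller Gaussian density than the Chen–LeBrun–Weber metric. -/
theorem stmt_17 :
    sInf (Set.range H) / Real.exp 2 >
        (12 - 3 * sInf (h '' Set.Ioi (0 : ℝ))) / Real.exp 2 ∧
      sInf (Set.range F) / Real.exp 2 <
        (21 / 2 - sInf (f '' Set.Ioi (0 : ℝ))) / Real.exp 2 := by
  have hH : 3.826 ≤ sInf (range H) := le_csInf (range_nonempty H) (forall_mem_range.2 le_H)
  have hh : 109 / 40 ≤ sInf (h '' Ioi 0) :=
    le_csInf ((nonempty_Ioi).image h) (forall_mem_image.2 fun _ hx => le_h hx)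
  have hF : sInf (range F) ≤ F (-(87 / 200)) :=
    csInf_le ⟨0, forall_mem_range.2 F_nonneg⟩ (mem_range_self _)
  have hf : sInf (f '' Ioi 0) ≤ f (24 / 25) :=
    csInf_le ⟨0, forall_mem_image.2 fun _ hx => f_nonneg hx⟩ (mem_image_of_mem f (by norm_num))
  have hf_val : f (24 / 25) < 7.1365 := by norm_num [f]
  constructor
  · exact div_lt_div_of_pos_right (by linarith) (exp_pos 2)
  · exact div_lt_div_of_pos_right (by linarith [F_le]) (exp_pos 2)
end
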